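/- (Theorem 1, known wind velocity.) Let k ≥ 0, assume 0 ≤ S(x,t) ≤ S₀(x) for all x ∈ W and t ≥ 0, assume Assumption 1, namely α > 0, and assume the feedback boundary condition ∂T/∂n(x,t) = [ (n(x)·v(x,t) − 2k)/(2ε) − 2R₂/R₁ ]·(T(x,t) − T_a) holds for all x ∈ ∂W and t > 0. Then for every t ≥ 0: ∫_W (T(x,t) − T_a)² dx ≤ exp(−α·t)·∫_W (T₀(x) − T_a)² dx. -/

import Mathlib

/-!
Energy method. With `u = T - T_a`, the energy `E(t) = ∫_W u²` has `E' = ∫_W 2 u ∂ₜT`. After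
substituting the PDE, `2 u ∂ₜT + α u²` is bounded pointwise by the divergence of the flux
`Φ = 2ε u ∇T - u² v + (2ε/R₁) u² x`: the reaction term is controlled by `s r̃(s) ≤ s²/(eγ)` and
`S ≤ sup S₀`, the divergence of `v` by `𝒱`, and the extra `(2ε/R₁) u²` by Cauchy–Schwarz with
`|x|² ≤ R₁`. On each edge the feedback law turns the outward flux into
`Φ·n = -2k u² - (2ε/R₁)(2R₂ - x·n) u² ≤ 0`, so `E' ≤ -α E`, and Grönwall's inequality concludes.
-/

open Set MeasureTheory intervalIntegral

/-- The shifted Arrhenius reaction-rate function with activation parameter `γ`. -/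
noncomputable def rt (γ s : ℝ) : ℝ := if 0 < s then Real.exp (-γ / s) else 0

/-- The four-edge boundary integral `∫_{∂W} g dσ` over the boundary of the
rectangle `[a₁,b₁]×[a₂,b₂]`. -/
noncomputable def bInt (a₁ b₁ a₂ b₂ : ℝ) (g : ℝ → ℝ → ℝ) : ℝ :=
  (∫ y in a₂..b₂, g a₁ y) + (∫ y in a₂..b₂, g b₁ y) +
  (∫ x in a₁..b₁, g x a₂) + (∫ x in a₁..b₁, g x b₂)

open Function Metric Real

theorem le_exp_mul_of_hasDerivAt_le_neg_mul {f f' : ℝ → ℝ} {α : ℝ} (hf : ContinuousOn f (Ici 0))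
    (hderiv : ∀ t > 0, HasDerivAt f (f' t) t) (hle : ∀ t > 0, f' t ≤ -α * f t)
    {t : ℝ} (ht : 0 ≤ t) : f t ≤ exp (-α * t) * f 0 := by
  have hanti : AntitoneOn (fun s => exp (α * s) * f s) (Ici 0) := by
    refine antitoneOn_of_hasDerivWithinAt_nonpos (convex_Ici 0)
      ((continuous_exp.comp (continuous_const_mul α)).continuousOn.mul hf)
      (f' := fun s => exp (α * s) * (α * f s + f' s)) ?_ ?_ <;> rw [interior_Ici]
    · intro s hs
      refine ((((hasDerivAt_id s).const_mul α).exp.mul (hderiv s hs)).congr_deriv ?_)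
        |>.hasDerivWithinAt
      simp only [id, mul_one]; ring
    · intro s hs
      exact mul_nonpos_of_nonneg_of_nonpos (exp_pos _).le (by linarith [hle s hs])
  calc f t = exp (-α * t) * (exp (α * t) * f t) := by
        rw [← mul_assoc, ← exp_add]; simp
    _ ≤ exp (-α * t) * f 0 := by
        gcongr
        simpa using hanti (mem_Ici.2 le_rfl) (mem_Ici.2 ht) ht

section ParametricIntegral

variable {X : Type*} [TopologicalSpace X] [T2Space X]
  [MeasurableSpace X] [OpensMeasurableSpace X] {μ : Measure X} [IsFiniteMeasureOnCompacts μ]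
  {K : Set X}

theorem continuousOn_setIntegral_of_continuousOn_uncurry (hK : IsCompact K) {I : Set ℝ}
    (hI : IsClosed I) {f : X → ℝ → ℝ} (hf : ContinuousOn (uncurry f) (K ×ˢ I)) :
    ContinuousOn (fun t => ∫ x in K, f x t ∂μ) I := by
  intro t₀ ht₀
  obtain ⟨M, hM⟩ := (hK.prod ((isCompact_closedBall t₀ 1).inter_left hI))
    |>.exists_bound_of_continuousOn (hf.mono (prod_mono_right inter_subset_left))
  refine continuousWithinAt_of_dominated (bound := fun _ => M) ?_ ?_
    (integrableOn_const hK.measure_ne_top) ?_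
  · filter_upwards [self_mem_nhdsWithin] with t ht
    exact (hf.uncurry_right t ht).aestronglyMeasurable hK.measurableSet
  · filter_upwards [inter_mem_nhdsWithin I (closedBall_mem_nhds t₀ one_pos)] with t ht
    exact ae_restrict_of_forall_mem hK.measurableSet fun x hx => hM (x, t) ⟨hx, ht⟩
  · exact ae_restrict_of_forall_mem hK.measurableSet fun x hx => hf.uncurry_left x hx t₀ ht₀

theorem hasDerivAt_setIntegral_of_continuousOn_uncurry (hK : IsCompact K) {I : Set ℝ}
    (hI : IsOpen I) {f f' : X → ℝ → ℝ} (hf : ContinuousOn (uncurry f) (K ×ˢ I))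
    (hf' : ContinuousOn (uncurry f') (K ×ˢ I))
    (hderiv : ∀ x ∈ K, ∀ t ∈ I, HasDerivAt (f x) (f' x t) t) {t₀ : ℝ} (ht₀ : t₀ ∈ I) :
    HasDerivAt (fun t => ∫ x in K, f x t ∂μ) (∫ x in K, f' x t₀ ∂μ) t₀ := by
  obtain ⟨δ, hδ, hδI⟩ := nhds_basis_closedBall.mem_iff.1 (hI.mem_nhds ht₀)
  obtain ⟨M, hM⟩ := (hK.prod (isCompact_closedBall t₀ δ)).exists_bound_of_continuousOn
    (hf'.mono (prod_mono_right hδI))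
  refine (hasDerivAt_integral_of_dominated_loc_of_deriv_le (F := fun t x => f x t)
    (F' := fun t x => f' x t) (μ := μ.restrict K) (bound := fun _ => M)
    (ball_mem_nhds t₀ hδ) ?_ ?_ ?_ ?_ (integrableOn_const (hK.measure_ne_top (μ := μ))) ?_).2
  · filter_upwards [hI.mem_nhds ht₀] with t ht
    exact (hf.uncurry_right t ht).aestronglyMeasurable hK.measurableSet
  · exact (hf.uncurry_right t₀ ht₀).integrableOn_compact (μ := μ) hK
  · exact (hf'.uncurry_right t₀ ht₀).aestronglyMeasurable hK.measurableSet
  · exact ae_restrict_of_forall_mem hK.measurableSet fun x hx t ht =>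
      hM (x, t) ⟨hx, ball_subset_closedBall ht⟩
  · exact ae_restrict_of_forall_mem hK.measurableSet fun x hx t ht =>
      hderiv x hx t (hδI (ball_subset_closedBall ht))

theorem setIntegral_sq_le_exp_mul_of_dissipation (hK : IsCompact K) {u u' : X → ℝ → ℝ} {α : ℝ}
    (hu : ContinuousOn (uncurry u) (K ×ˢ Ici 0)) (hu' : ContinuousOn (uncurry u') (K ×ˢ Ioi 0))
    (hderiv : ∀ x ∈ K, ∀ t > 0, HasDerivAt (u x) (u' x t) t)
    (hdiss : ∀ t > 0, ∫ x in K, 2 * u x t * u' x t ∂μ ≤ -α * ∫ x in K, u x t ^ 2 ∂μ)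
    {t : ℝ} (ht : 0 ≤ t) :
    ∫ x in K, u x t ^ 2 ∂μ ≤ exp (-α * t) * ∫ x in K, u x 0 ^ 2 ∂μ := by
  have hu_pos := hu.mono (prod_mono_right Ioi_subset_Ici_self)
  refine le_exp_mul_of_hasDerivAt_le_neg_mul
    (continuousOn_setIntegral_of_continuousOn_uncurry (f := fun x t => u x t ^ 2) hK
      isClosed_Ici (hu.fun_pow 2))
    (fun t ht => hasDerivAt_setIntegral_of_continuousOn_uncurry (f := fun x t => u x t ^ 2)
      (f' := fun x t => 2 * u x t * u' x t) hK isOpen_Ioi (hu_pos.fun_pow 2)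
      ((continuousOn_const.fun_mul hu_pos).fun_mul hu') ?_ ht) hdiss ht
  intro x hx s hs
  simpa [mul_comm] using (hderiv x hx s hs).fun_pow 2

end ParametricIntegral

section Rectangle

variable {a₁ b₁ a₂ b₂ : ℝ}

theorem integral_integral_eq_setIntegral_Icc_prod (h₁ : a₁ ≤ b₁) (h₂ : a₂ ≤ b₂)
    {f : ℝ → ℝ → ℝ} (hf : IntegrableOn (fun p : ℝ × ℝ => f p.1 p.2) (Icc a₁ b₁ ×ˢ Icc a₂ b₂)) :
    ∫ x in a₁..b₁, ∫ y in a₂..b₂, f x y = ∫ p in Icc a₁ b₁ ×ˢ Icc a₂ b₂, f p.1 p.2 := by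
  rw [Measure.volume_eq_prod, setIntegral_prod _ hf]
  simp only [integral_of_le h₁, integral_of_le h₂, integral_Icc_eq_integral_Ioc]

theorem setIntegral_Icc_prod_eq_of_hasDerivAt_snd (h₁ : a₁ ≤ b₁) (h₂ : a₂ ≤ b₂)
    {F G : ℝ → ℝ → ℝ} (hF : ∀ x ∈ Icc a₁ b₁, ∀ y ∈ Icc a₂ b₂, HasDerivAt (F x) (G x y) y)
    (hG : ContinuousOn (fun p : ℝ × ℝ => G p.1 p.2) (Icc a₁ b₁ ×ˢ Icc a₂ b₂)) :
    ∫ p in Icc a₁ b₁ ×ˢ Icc a₂ b₂, G p.1 p.2 = ∫ x in a₁..b₁, (F x b₂ - F x a₂) := by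
  rw [← integral_integral_eq_setIntegral_Icc_prod h₁ h₂
    (hG.integrableOn_compact (isCompact_Icc.prod isCompact_Icc))]
  refine integral_congr fun x hx => ?_
  rw [uIcc_of_le h₁] at hx
  exact integral_eq_sub_of_hasDerivAt (fun y hy => hF x hx y (uIcc_of_le h₂ ▸ hy))
    ((hG.uncurry_left (f := G) x hx).intervalIntegrable_of_Icc h₂)

theorem setIntegral_Icc_prod_eq_of_hasDerivAt_fst (h₁ : a₁ ≤ b₁) (h₂ : a₂ ≤ b₂)
    {F G : ℝ → ℝ → ℝ} (hF : ∀ x ∈ Icc a₁ b₁, ∀ y ∈ Icc a₂ b₂, HasDerivAt (F · y) (G x y) x)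
    (hG : ContinuousOn (fun p : ℝ × ℝ => G p.1 p.2) (Icc a₁ b₁ ×ˢ Icc a₂ b₂)) :
    ∫ p in Icc a₁ b₁ ×ˢ Icc a₂ b₂, G p.1 p.2 = ∫ y in a₂..b₂, (F b₁ y - F a₁ y) := by
  rw [← setIntegral_Icc_prod_eq_of_hasDerivAt_snd h₂ h₁ (F := fun y x => F x y)
    (fun y hy x hx => hF x hx y hy) (hG.comp continuous_swap.continuousOn fun q hq => ⟨hq.2, hq.1⟩),
    Measure.volume_eq_prod]
  exact (setIntegral_prod_swap _ _ _).symm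

theorem setIntegral_two_mul_le_of_le_divergence (h₁ : a₁ ≤ b₁) (h₂ : a₂ ≤ b₂)
    {u w F₁ G₁ F₂ G₂ : ℝ → ℝ → ℝ} {α : ℝ}
    (hu : ContinuousOn (fun p : ℝ × ℝ => u p.1 p.2) (Icc a₁ b₁ ×ˢ Icc a₂ b₂))
    (hw : ContinuousOn (fun p : ℝ × ℝ => w p.1 p.2) (Icc a₁ b₁ ×ˢ Icc a₂ b₂))
    (hG₁ : ContinuousOn (fun p : ℝ × ℝ => G₁ p.1 p.2) (Icc a₁ b₁ ×ˢ Icc a₂ b₂))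
    (hG₂ : ContinuousOn (fun p : ℝ × ℝ => G₂ p.1 p.2) (Icc a₁ b₁ ×ˢ Icc a₂ b₂))
    (hF₁ : ∀ x ∈ Icc a₁ b₁, ∀ y ∈ Icc a₂ b₂, HasDerivAt (F₁ · y) (G₁ x y) x)
    (hF₂ : ∀ x ∈ Icc a₁ b₁, ∀ y ∈ Icc a₂ b₂, HasDerivAt (F₂ x) (G₂ x y) y)
    (hF₁a : ∀ y ∈ Icc a₂ b₂, 0 ≤ F₁ a₁ y) (hF₁b : ∀ y ∈ Icc a₂ b₂, F₁ b₁ y ≤ 0)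
    (hF₂a : ∀ x ∈ Icc a₁ b₁, 0 ≤ F₂ x a₂) (hF₂b : ∀ x ∈ Icc a₁ b₁, F₂ x b₂ ≤ 0)
    (hle : ∀ p ∈ Icc a₁ b₁ ×ˢ Icc a₂ b₂,
      2 * u p.1 p.2 * w p.1 p.2 + α * u p.1 p.2 ^ 2 ≤ G₁ p.1 p.2 + G₂ p.1 p.2) :
    ∫ p in Icc a₁ b₁ ×ˢ Icc a₂ b₂, 2 * u p.1 p.2 * w p.1 p.2 ≤
      -α * ∫ p in Icc a₁ b₁ ×ˢ Icc a₂ b₂, u p.1 p.2 ^ 2 := by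
  have hG₁_int : ∫ p in Icc a₁ b₁ ×ˢ Icc a₂ b₂, G₁ p.1 p.2 ≤ 0 := by
    rw [setIntegral_Icc_prod_eq_of_hasDerivAt_fst h₁ h₂ hF₁ hG₁, ← neg_nonneg,
      ← intervalIntegral.integral_neg]
    exact integral_nonneg h₂ fun y hy => by linarith [hF₁a y hy, hF₁b y hy]
  have hG₂_int : ∫ p in Icc a₁ b₁ ×ˢ Icc a₂ b₂, G₂ p.1 p.2 ≤ 0 := by
    rw [setIntegral_Icc_prod_eq_of_hasDerivAt_snd h₁ h₂ hF₂ hG₂, ← neg_nonneg,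
      ← intervalIntegral.integral_neg]
    exact integral_nonneg h₁ fun x hx => by linarith [hF₂a x hx, hF₂b x hx]
  set R := Icc a₁ b₁ ×ˢ Icc a₂ b₂
  have hint : ∀ g : ℝ × ℝ → ℝ, ContinuousOn g R → IntegrableOn g R := fun g hg =>
    hg.integrableOn_compact (isCompact_Icc.prod isCompact_Icc)
  have huw := hint (fun p => 2 * u p.1 p.2 * w p.1 p.2) (by fun_prop)
  have hu2 := hint (fun p => α * u p.1 p.2 ^ 2) (by fun_prop)
  have hmono : ∫ p in R, (2 * u p.1 p.2 * w p.1 p.2 + α * u p.1 p.2 ^ 2) ≤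
      ∫ p in R, (G₁ p.1 p.2 + G₂ p.1 p.2) :=
    setIntegral_mono_on (huw.add hu2) ((hint _ hG₁).add (hint _ hG₂))
      (measurableSet_Icc.prod measurableSet_Icc) hle
  rw [integral_add huw hu2, integral_add (hint _ hG₁) (hint _ hG₂),
    MeasureTheory.integral_const_mul] at hmono
  linarith

end Rectangle

theorem mul_rt_le {γ : ℝ} (hγ : 0 < γ) (s : ℝ) : s * rt γ s ≤ exp (-1) / γ * s ^ 2 := by
  unfold rt
  split_ifs with hs
  · calc s * exp (-γ / s) = s ^ 2 / γ * (γ / s * exp (-(γ / s))) := by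
          rw [neg_div]; field_simp
      _ ≤ s ^ 2 / γ * exp (-1) := by gcongr; exact mul_exp_neg_le_exp_neg_one _
      _ = exp (-1) / γ * s ^ 2 := by ring
  · rw [mul_zero]; positivity

theorem abs_le_of_sqrt_sq_add_sq_le {x y R : ℝ} (h : √(x ^ 2 + y ^ 2) ≤ R) : |x| ≤ R ∧ |y| ≤ R :=
  ⟨(abs_le_sqrt (le_add_of_nonneg_right (sq_nonneg y))).trans h,
    (abs_le_sqrt (le_add_of_nonneg_left (sq_nonneg x))).trans h⟩

section EnergyFlux

variable {ε β : ℝ}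

/-- The component along one axis of `2ε u ∇T - u² v + β u² x`, where `u = T - T_a` and `d`, `w`,
`z` are the components of `∇T`, `v`, `x` along that axis. -/
def energyFlux (ε β u w z d : ℝ) : ℝ := 2 * ε * u * d - w * u ^ 2 + β * z * u ^ 2

def energyFluxDeriv (ε β u w z d d' w' : ℝ) : ℝ :=
  2 * ε * d ^ 2 + 2 * ε * u * d' - w' * u ^ 2 - 2 * w * u * d + β * (u ^ 2 + 2 * z * u * d)

theorem HasDerivAt.energyFlux {U D V : ℝ → ℝ} {s d' w' : ℝ} (hU : HasDerivAt U (D s) s)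
    (hD : HasDerivAt D d' s) (hV : HasDerivAt V w' s) :
    HasDerivAt (fun r => energyFlux ε β (U r) (V r) r (D r))
      (energyFluxDeriv ε β (U s) (V s) s (D s) d' w') s := by
  unfold _root_.energyFlux energyFluxDeriv
  refine ((((hU.const_mul (2 * ε)).mul hD).sub (hV.mul (hU.fun_pow 2))).add
    (((hasDerivAt_id' s).const_mul β).mul (hU.fun_pow 2))).congr_deriv ?_
  push_cast
  ring

variable {R₁ R₂ k u w z d : ℝ}

theorem energyFlux_nonpos_of_feedback (hε : 0 < ε) (hR₁ : 0 ≤ R₁) (hk : 0 ≤ k)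
    (hz : |z| ≤ R₂) (hbc : d = ((w - 2 * k) / (2 * ε) - 2 * R₂ / R₁) * u) :
    energyFlux ε (2 * ε / R₁) u w z d ≤ 0 := by
  have h2ε : 2 * ε * ((w - 2 * k) / (2 * ε)) = w - 2 * k := by field_simp
  have hflux : energyFlux ε (2 * ε / R₁) u w z d
      = -(2 * k * u ^ 2) - 2 * ε / R₁ * (2 * R₂ - z) * u ^ 2 := by
    rw [energyFlux, hbc]
    linear_combination u ^ 2 * h2ε
  have hz' : 0 ≤ 2 * R₂ - z := by linarith [le_abs_self z, abs_nonneg z]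
  rw [hflux]
  nlinarith [mul_nonneg (mul_nonneg (by positivity : 0 ≤ 2 * ε / R₁) hz') (sq_nonneg u),
    mul_nonneg hk (sq_nonneg u)]

theorem energyFlux_nonneg_of_feedback (hε : 0 < ε) (hR₁ : 0 ≤ R₁) (hk : 0 ≤ k)
    (hz : |z| ≤ R₂) (hbc : -d = ((-w - 2 * k) / (2 * ε) - 2 * R₂ / R₁) * u) :
    0 ≤ energyFlux ε (2 * ε / R₁) u w z d := by
  have := energyFlux_nonpos_of_feedback hε hR₁ hk ((abs_neg z).trans_le hz) hbc
  unfold energyFlux at this ⊢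
  linarith

end EnergyFlux

theorem two_mul_mul_add_sq_le_energyFluxDeriv_add
    {ε A C γ R₁ Vs M x y u T₁ T₂ T₁₁ T₂₂ v₁ v₂ dv₁ dv₂ S : ℝ}
    (hε : 0 ≤ ε) (hA : 0 ≤ A) (hγ : 0 < γ) (hR₁ : 0 < R₁) (hxy : x ^ 2 + y ^ 2 ≤ R₁)
    (hS : 0 ≤ S) (hSM : S ≤ M) (hdiv : dv₁ + dv₂ ≤ Vs) :
    2 * u * (ε * (T₁₁ + T₂₂) - (v₁ * T₁ + v₂ * T₂) + A * (S * rt γ u - C * u))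
        + (2 * A * C + 2 * ε / R₁ - Vs - (2 * A * exp (-1) / γ) * M) * u ^ 2
      ≤ energyFluxDeriv ε (2 * ε / R₁) u v₁ x T₁ T₁₁ dv₁
        + energyFluxDeriv ε (2 * ε / R₁) u v₂ y T₂ T₂₂ dv₂ := by
  have hreact : S * (u * rt γ u) ≤ M * (exp (-1) / γ * u ^ 2) :=
    (mul_le_mul_of_nonneg_left (mul_rt_le hγ u) hS).trans
      (mul_le_mul_of_nonneg_right hSM (by positivity))
  -- Cauchy–Schwarz, with `x² + y² ≤ R₁`
  have hcross : 0 ≤ R₁ * (T₁ ^ 2 + T₂ ^ 2) + u ^ 2 + 2 * u * (x * T₁ + y * T₂) := by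
    nlinarith [sq_nonneg (x * T₁ + y * T₂ + u), sq_nonneg (x * T₂ - y * T₁),
      mul_nonneg (sub_nonneg.2 hxy) (add_nonneg (sq_nonneg T₁) (sq_nonneg T₂))]
  have hβR : 2 * ε / R₁ * R₁ * (T₁ ^ 2 + T₂ ^ 2) = 2 * ε * (T₁ ^ 2 + T₂ ^ 2) := by
    field_simp
  unfold energyFluxDeriv
  have h1 := mul_nonneg (by positivity : 0 ≤ 2 * ε / R₁) hcross
  have h2 := mul_nonneg (sub_nonneg.2 hdiv) (sq_nonneg u)
  have h3 := mul_le_mul_of_nonneg_left hreact hA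
  linear_combination h1 + h2 + 2 * h3 + hβR

theorem stmt10_general
    (a₁ b₁ a₂ b₂ ε A C γ Ta : ℝ)
    (ha : a₁ < b₁) (hb : a₂ < b₂)
    (hε : 0 < ε) (hA : 0 < A) (hγ : 0 < γ)
    (W bW : Set (ℝ × ℝ))
    (hW : W = Icc a₁ b₁ ×ˢ Icc a₂ b₂)
    (hbW : bW = (({a₁, b₁} : Set ℝ) ×ˢ Icc a₂ b₂) ∪ (Icc a₁ b₁ ×ˢ ({a₂, b₂} : Set ℝ)))
    (T S v₁ v₂ T₁ T₂ T₁₁ T₂₂ Tt dv₁ dv₂ : ℝ → ℝ → ℝ → ℝ)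
    (T₀ S₀ : ℝ → ℝ → ℝ)
    -- spatial and temporal derivatives of T and spatial derivatives of v
    (hT₁ : ∀ x y t, 0 ≤ t → HasDerivAt (fun s => T s y t) (T₁ x y t) x)
    (hT₂ : ∀ x y t, 0 ≤ t → HasDerivAt (fun s => T x s t) (T₂ x y t) y)
    (hT₁₁ : ∀ x y t, 0 ≤ t → HasDerivAt (fun s => T₁ s y t) (T₁₁ x y t) x)
    (hT₂₂ : ∀ x y t, 0 ≤ t → HasDerivAt (fun s => T₂ x s t) (T₂₂ x y t) y)
    (hTt : ∀ x y t, 0 < t → HasDerivAt (fun τ => T x y τ) (Tt x y t) t)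
    (hdv₁ : ∀ x y t, 0 ≤ t → HasDerivAt (fun s => v₁ s y t) (dv₁ x y t) x)
    (hdv₂ : ∀ x y t, 0 ≤ t → HasDerivAt (fun s => v₂ x s t) (dv₂ x y t) y)
    -- joint continuity on W × [0,∞) of T, S, v and all the above derivatives
    (hcont : ∀ f ∈ [T, S, v₁, v₂, T₁, T₂, T₁₁, T₂₂, Tt, dv₁, dv₂],
      ContinuousOn (fun q : (ℝ × ℝ) × ℝ => f q.1.1 q.1.2 q.2) (W ×ˢ Ici (0 : ℝ)))
    -- the PDEs on W × (0,∞)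
    (hPDE : ∀ x y, (x, y) ∈ W → ∀ t, 0 < t →
      Tt x y t = ε * (T₁₁ x y t + T₂₂ x y t)
        - (v₁ x y t * T₁ x y t + v₂ x y t * T₂ x y t)
        + A * (S x y t * rt γ (T x y t - Ta) - C * (T x y t - Ta)))
    -- initial data
    (hT0 : ∀ x y, T x y 0 = T₀ x y)
    (hS0b : ∀ x y, (x, y) ∈ W → 0 ≤ S₀ x y ∧ S₀ x y ≤ 1)
    -- fuel bound: 0 ≤ S(x,t) ≤ S₀(x) on W × [0,∞)
    (hSb : ∀ x y, (x, y) ∈ W → ∀ t, 0 ≤ t → 0 ≤ S x y t ∧ S x y t ≤ S₀ x y)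
    -- the constants R₁, R₂, 𝒱, sup S₀, α and the energy B
    (R₁ R₂ Vs MS₀ α : ℝ)
    (hR₁ : R₁ = sSup ((fun p : ℝ × ℝ => p.1 ^ 2 + p.2 ^ 2) '' W))
    (hR₂ : R₂ = sSup ((fun p : ℝ × ℝ => Real.sqrt (p.1 ^ 2 + p.2 ^ 2)) '' bW))
    (hVs : Vs = sSup ((fun q : (ℝ × ℝ) × ℝ =>
      |dv₁ q.1.1 q.1.2 q.2 + dv₂ q.1.1 q.1.2 q.2|) '' (W ×ˢ Ioi (0 : ℝ))))
    (hVbdd : BddAbove ((fun q : (ℝ × ℝ) × ℝ =>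
      |dv₁ q.1.1 q.1.2 q.2 + dv₂ q.1.1 q.1.2 q.2|) '' (W ×ˢ Ioi (0 : ℝ))))
    (hMS₀ : MS₀ = sSup ((fun p : ℝ × ℝ => S₀ p.1 p.2) '' W))
    (hα : α = 2 * A * C + 2 * ε / R₁ - Vs - (2 * A * Real.exp (-1) / γ) * MS₀)
    -- control gain and feedback boundary condition ∂T/∂n = ((n·v − 2k)/(2ε) − 2R₂/R₁)·(T − T_a)
    (k : ℝ) (hk : 0 ≤ k)
    (hbcl : ∀ y ∈ Icc a₂ b₂, ∀ t, 0 < t →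
      -T₁ a₁ y t = ((-v₁ a₁ y t - 2 * k) / (2 * ε) - 2 * R₂ / R₁) * (T a₁ y t - Ta))
    (hbcr : ∀ y ∈ Icc a₂ b₂, ∀ t, 0 < t →
      T₁ b₁ y t = ((v₁ b₁ y t - 2 * k) / (2 * ε) - 2 * R₂ / R₁) * (T b₁ y t - Ta))
    (hbcb : ∀ x ∈ Icc a₁ b₁, ∀ t, 0 < t →
      -T₂ x a₂ t = ((-v₂ x a₂ t - 2 * k) / (2 * ε) - 2 * R₂ / R₁) * (T x a₂ t - Ta))
    (hbct : ∀ x ∈ Icc a₁ b₁, ∀ t, 0 < t →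
      T₂ x b₂ t = ((v₂ x b₂ t - 2 * k) / (2 * ε) - 2 * R₂ / R₁) * (T x b₂ t - Ta)) :
    ∀ t, 0 ≤ t →
      (∫ x in a₁..b₁, ∫ y in a₂..b₂, (T x y t - Ta) ^ 2)
        ≤ Real.exp (-α * t) * ∫ x in a₁..b₁, ∫ y in a₂..b₂, (T₀ x y - Ta) ^ 2 := by
  subst hW
  intro t ht
  have hK : IsCompact (Icc a₁ b₁ ×ˢ Icc a₂ b₂) := isCompact_Icc.prod isCompact_Icc
  have hR₁le : ∀ p ∈ Icc a₁ b₁ ×ˢ Icc a₂ b₂, p.1 ^ 2 + p.2 ^ 2 ≤ R₁ := fun p hp =>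
    hR₁ ▸ le_csSup (hK.bddAbove_image (by fun_prop)) (mem_image_of_mem _ hp)
  have hR₁pos : 0 < R₁ := by
    nlinarith [hR₁le (a₁, a₂) ⟨left_mem_Icc.2 ha.le, left_mem_Icc.2 hb.le⟩,
      hR₁le (b₁, a₂) ⟨right_mem_Icc.2 ha.le, left_mem_Icc.2 hb.le⟩,
      mul_pos (sub_pos.2 ha) (sub_pos.2 ha)]
  have hcorner : ∀ p ∈ bW, √(p.1 ^ 2 + p.2 ^ 2) ≤ R₂ := fun p hp =>
    hR₂ ▸ le_csSup (hbW ▸ ((Set.toFinite {a₁, b₁}).isCompact.prod isCompact_Icc).union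
      (isCompact_Icc.prod (Set.toFinite {a₂, b₂}).isCompact) |>.bddAbove_image (by fun_prop))
      (mem_image_of_mem _ hp)
  obtain ⟨ha₁, ha₂⟩ := abs_le_of_sqrt_sq_add_sq_le
    (hcorner (a₁, a₂) (hbW ▸ Or.inl ⟨by simp, left_mem_Icc.2 hb.le⟩))
  obtain ⟨hb₁, hb₂⟩ := abs_le_of_sqrt_sq_add_sq_le
    (hcorner (b₁, b₂) (hbW ▸ Or.inl ⟨by simp, right_mem_Icc.2 hb.le⟩))
  have hdiv : ∀ p ∈ Icc a₁ b₁ ×ˢ Icc a₂ b₂, ∀ τ > 0, dv₁ p.1 p.2 τ + dv₂ p.1 p.2 τ ≤ Vs :=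
    fun p hp τ hτ => (le_abs_self _).trans
      (hVs ▸ le_csSup hVbdd (mem_image_of_mem _ (mk_mem_prod hp hτ)))
  have hS₀ : ∀ p ∈ Icc a₁ b₁ ×ˢ Icc a₂ b₂, S₀ p.1 p.2 ≤ MS₀ := fun p hp =>
    hMS₀ ▸ le_csSup ⟨1, forall_mem_image.2 fun q hq => (hS0b q.1 q.2 hq).2⟩
      (mem_image_of_mem _ hp)
  have hslice : ∀ τ ≥ 0, ∀ f ∈ [T, S, v₁, v₂, T₁, T₂, T₁₁, T₂₂, Tt, dv₁, dv₂],
      ContinuousOn (fun p : ℝ × ℝ => f p.1 p.2 τ) (Icc a₁ b₁ ×ˢ Icc a₂ b₂) := fun τ hτ f hf =>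
    (hcont f hf).uncurry_right (f := fun (p : ℝ × ℝ) τ => f p.1 p.2 τ) τ hτ
  have hint : ∀ τ ≥ 0, IntegrableOn (fun p : ℝ × ℝ => (T p.1 p.2 τ - Ta) ^ 2)
      (Icc a₁ b₁ ×ˢ Icc a₂ b₂) := fun τ hτ =>
    (((hslice τ hτ T (by simp)).sub continuousOn_const).pow 2).integrableOn_compact hK
  simp only [← hT0]
  rw [integral_integral_eq_setIntegral_Icc_prod ha.le hb.le (hint t ht),
    integral_integral_eq_setIntegral_Icc_prod ha.le hb.le (hint 0 le_rfl)]
  refine setIntegral_sq_le_exp_mul_of_dissipation hK (u := fun (p : ℝ × ℝ) τ => T p.1 p.2 τ - Ta)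
    (u' := fun (p : ℝ × ℝ) τ => Tt p.1 p.2 τ)
    ((hcont T (by simp)).sub continuousOn_const)
    ((hcont Tt (by simp)).mono (prod_mono_right Ioi_subset_Ici_self))
    (fun p _ τ hτ => (hTt p.1 p.2 τ hτ).sub_const Ta) (fun τ hτ => ?_) ht
  obtain ⟨cT, -, cv₁, cv₂, cT₁, cT₂, cT₁₁, cT₂₂, cTt, cdv₁, cdv₂, -⟩ := by
    simpa only [List.forall_mem_cons] using hslice τ hτ.le
  refine setIntegral_two_mul_le_of_le_divergence ha.le hb.le
    (u := fun x y => T x y τ - Ta) (w := fun x y => Tt x y τ)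
    (F₁ := fun x y => energyFlux ε (2 * ε / R₁) (T x y τ - Ta) (v₁ x y τ) x (T₁ x y τ))
    (F₂ := fun x y => energyFlux ε (2 * ε / R₁) (T x y τ - Ta) (v₂ x y τ) y (T₂ x y τ))
    (by fun_prop) (by fun_prop) (by unfold energyFluxDeriv; fun_prop)
    (by unfold energyFluxDeriv; fun_prop)
    (fun x _ y _ => ((hT₁ x y τ hτ.le).sub_const Ta).energyFlux (hT₁₁ x y τ hτ.le)
      (hdv₁ x y τ hτ.le))
    (fun x _ y _ => ((hT₂ x y τ hτ.le).sub_const Ta).energyFlux (hT₂₂ x y τ hτ.le)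
      (hdv₂ x y τ hτ.le))
    (fun y hy => energyFlux_nonneg_of_feedback hε hR₁pos.le hk ha₁ (hbcl y hy τ hτ))
    (fun y hy => energyFlux_nonpos_of_feedback hε hR₁pos.le hk hb₁ (hbcr y hy τ hτ))
    (fun x hx => energyFlux_nonneg_of_feedback hε hR₁pos.le hk ha₂ (hbcb x hx τ hτ))
    (fun x hx => energyFlux_nonpos_of_feedback hε hR₁pos.le hk hb₂ (hbct x hx τ hτ))
    (fun p hp => ?_)
  obtain ⟨hS, hSS₀⟩ := hSb p.1 p.2 hp τ hτ.le
  rw [hPDE p.1 p.2 hp τ hτ, hα]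
  exact two_mul_mul_add_sq_le_energyFluxDeriv_add hε.le hA.le hγ hR₁pos (hR₁le p hp) hS
    (hSS₀.trans (hS₀ p hp)) (hdiv p hp τ hτ)

/-- Energy decay estimate for the wildfire model on the rectangle `W = [a₁,b₁]×[a₂,b₂]`
under the feedback boundary control `∂T/∂n = ((n·v − 2k)/(2ε) − 2R₂/R₁)·(T − T_a)`:
if Assumption 1 holds (`α > 0`), then for every `t ≥ 0`,
`∫_W (T(x,t) − T_a)² dx ≤ exp(−α·t)·∫_W (T₀(x) − T_a)² dx` (Theorem 1). -/
theorem stmt10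
    (a₁ b₁ a₂ b₂ ε A C γ Ta CS : ℝ)
    (ha : a₁ < b₁) (hb : a₂ < b₂)
    (hε : 0 < ε) (hA : 0 < A) (hC : 0 < C) (hγ : 0 < γ) (hTa : 0 < Ta) (hCS : 0 ≤ CS)
    (W bW : Set (ℝ × ℝ))
    (hW : W = Icc a₁ b₁ ×ˢ Icc a₂ b₂)
    (hbW : bW = (({a₁, b₁} : Set ℝ) ×ˢ Icc a₂ b₂) ∪ (Icc a₁ b₁ ×ˢ ({a₂, b₂} : Set ℝ)))
    (T S v₁ v₂ T₁ T₂ T₁₁ T₂₂ Tt dv₁ dv₂ : ℝ → ℝ → ℝ → ℝ)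
    (T₀ S₀ : ℝ → ℝ → ℝ)
    -- spatial and temporal derivatives of T and spatial derivatives of v
    (hT₁ : ∀ x y t, 0 ≤ t → HasDerivAt (fun s => T s y t) (T₁ x y t) x)
    (hT₂ : ∀ x y t, 0 ≤ t → HasDerivAt (fun s => T x s t) (T₂ x y t) y)
    (hT₁₁ : ∀ x y t, 0 ≤ t → HasDerivAt (fun s => T₁ s y t) (T₁₁ x y t) x)
    (hT₂₂ : ∀ x y t, 0 ≤ t → HasDerivAt (fun s => T₂ x s t) (T₂₂ x y t) y)
    (hTt : ∀ x y t, 0 < t → HasDerivAt (fun τ => T x y τ) (Tt x y t) t)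
    (hdv₁ : ∀ x y t, 0 ≤ t → HasDerivAt (fun s => v₁ s y t) (dv₁ x y t) x)
    (hdv₂ : ∀ x y t, 0 ≤ t → HasDerivAt (fun s => v₂ x s t) (dv₂ x y t) y)
    -- joint continuity on W × [0,∞) of T, S, v and all the above derivatives
    (hcont : ∀ f ∈ [T, S, v₁, v₂, T₁, T₂, T₁₁, T₂₂, Tt, dv₁, dv₂],
      ContinuousOn (fun q : (ℝ × ℝ) × ℝ => f q.1.1 q.1.2 q.2) (W ×ˢ Ici (0 : ℝ)))
    -- the PDEs on W × (0,∞)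
    (hPDE : ∀ x y, (x, y) ∈ W → ∀ t, 0 < t →
      Tt x y t = ε * (T₁₁ x y t + T₂₂ x y t)
        - (v₁ x y t * T₁ x y t + v₂ x y t * T₂ x y t)
        + A * (S x y t * rt γ (T x y t - Ta) - C * (T x y t - Ta)))
    (hSdot : ∀ x y, (x, y) ∈ W → ∀ t, 0 < t →
      HasDerivAt (fun τ => S x y τ) (-CS * S x y t * rt γ (T x y t - Ta)) t)
    -- initial data
    (hT0 : ∀ x y, T x y 0 = T₀ x y) (hS0 : ∀ x y, S x y 0 = S₀ x y)
    (hS0b : ∀ x y, (x, y) ∈ W → 0 ≤ S₀ x y ∧ S₀ x y ≤ 1)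
    -- fuel bound: 0 ≤ S(x,t) ≤ S₀(x) on W × [0,∞)
    (hSb : ∀ x y, (x, y) ∈ W → ∀ t, 0 ≤ t → 0 ≤ S x y t ∧ S x y t ≤ S₀ x y)
    -- the constants R₁, R₂, 𝒱, sup S₀, α and the energy B
    (R₁ R₂ Vs MS₀ α : ℝ) (B : ℝ → ℝ)
    (hR₁ : R₁ = sSup ((fun p : ℝ × ℝ => p.1 ^ 2 + p.2 ^ 2) '' W))
    (hR₂ : R₂ = sSup ((fun p : ℝ × ℝ => Real.sqrt (p.1 ^ 2 + p.2 ^ 2)) '' bW))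
    (hVs : Vs = sSup ((fun q : (ℝ × ℝ) × ℝ =>
      |dv₁ q.1.1 q.1.2 q.2 + dv₂ q.1.1 q.1.2 q.2|) '' (W ×ˢ Ioi (0 : ℝ))))
    (hVbdd : BddAbove ((fun q : (ℝ × ℝ) × ℝ =>
      |dv₁ q.1.1 q.1.2 q.2 + dv₂ q.1.1 q.1.2 q.2|) '' (W ×ˢ Ioi (0 : ℝ))))
    (hMS₀ : MS₀ = sSup ((fun p : ℝ × ℝ => S₀ p.1 p.2) '' W))
    (hα : α = 2 * A * C + 2 * ε / R₁ - Vs - (2 * A * Real.exp (-1) / γ) * MS₀)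
    (hB : B = fun t => (1 / 2) * ∫ x in a₁..b₁, ∫ y in a₂..b₂, (T x y t - Ta) ^ 2)
    -- control gain and feedback boundary condition ∂T/∂n = ((n·v − 2k)/(2ε) − 2R₂/R₁)·(T − T_a)
    (k : ℝ) (hk : 0 ≤ k)
    -- Assumption 1
    (hα0 : 0 < α)
    (hbcl : ∀ y ∈ Icc a₂ b₂, ∀ t, 0 < t →
      -T₁ a₁ y t = ((-v₁ a₁ y t - 2 * k) / (2 * ε) - 2 * R₂ / R₁) * (T a₁ y t - Ta))
    (hbcr : ∀ y ∈ Icc a₂ b₂, ∀ t, 0 < t →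
      T₁ b₁ y t = ((v₁ b₁ y t - 2 * k) / (2 * ε) - 2 * R₂ / R₁) * (T b₁ y t - Ta))
    (hbcb : ∀ x ∈ Icc a₁ b₁, ∀ t, 0 < t →
      -T₂ x a₂ t = ((-v₂ x a₂ t - 2 * k) / (2 * ε) - 2 * R₂ / R₁) * (T x a₂ t - Ta))
    (hbct : ∀ x ∈ Icc a₁ b₁, ∀ t, 0 < t →
      T₂ x b₂ t = ((v₂ x b₂ t - 2 * k) / (2 * ε) - 2 * R₂ / R₁) * (T x b₂ t - Ta)) :
    ∀ t, 0 ≤ t →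
      (∫ x in a₁..b₁, ∫ y in a₂..b₂, (T x y t - Ta) ^ 2)
        ≤ Real.exp (-α * t) * ∫ x in a₁..b₁, ∫ y in a₂..b₂, (T₀ x y - Ta) ^ 2 :=
  stmt10_general a₁ b₁ a₂ b₂ ε A C γ Ta ha hb hε hA hγ W bW hW hbW T S v₁ v₂ T₁ T₂ T₁₁ T₂₂ Tt dv₁
    dv₂ T₀ S₀ hT₁ hT₂ hT₁₁ hT₂₂ hTt hdv₁ hdv₂ hcont hPDE hT0 hS0b hSb R₁ R₂ Vs MS₀ α hR₁ hR₂ hVs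
    hVbdd hMS₀ hα k hk hbcl hbcr hbcb hbct
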